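/- Let G be a standard Gaussian random variable and let s, t ∈ ℝ. Then E[(√(1 + t²) G + t s)_−²] = (1 + t² + t² s²) · Q(ts/√(1 + t²)) − t s √(1 + t²) · ψ(ts/√(1 + t²)), where ψ(x) = (1/√(2π)) e^{−x²/2} is the standard normal density and Q(x) = ∫_x^∞ ψ(u) du is the standard normal tail function. Consequently, for the Gaussian-mixture model the threshold function satisfies g(κ) = min_{t∈ℝ} E[(G√(1+t²) + ts)_−²] = min_{t∈ℝ} { (1 + t² + t²s²) Q(ts/√(1+t²)) − ts√(1+t²) ψ(ts/√(1+t²)) }. -/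

import Mathlib

open MeasureTheory ProbabilityTheory Filter Set

/-- The negative part `(x)₋ = min x 0`. -/
noncomputable def negp (x : ℝ) : ℝ := min x 0

/-- The standard Gaussian measure on `ℝ`. -/
noncomputable def stdGaussian : Measure ℝ := gaussianReal 0 1

/-- The standard normal density `ψ`. -/
noncomputable def gaussPDF (x : ℝ) : ℝ := (Real.sqrt (2 * Real.pi))⁻¹ * Real.exp (-(x ^ 2) / 2)

/-- The standard normal tail function `Q(x) = ∫_x^∞ ψ(u) du`. -/
noncomputable def gaussTail (x : ℝ) : ℝ := ∫ u in Set.Ioi x, gaussPDF u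

/-! For `a > 0`, evenness of `ψ` gives `E[(aG + b)₋²] = ∫_{b/a}^∞ (b - a u)² ψ(u) du`. Since
`ψ' = -u ψ`, integration by parts yields the truncated moments `∫_c^∞ u ψ = ψ(c)` and
`∫_c^∞ u² ψ = c ψ(c) + Q(c)`; expanding the square gives `(a² + b²) Q(b/a) - a b ψ(b/a)`, which
for `a = √(1 + t²)`, `b = t s` is the claimed identity. The infima then agree termwise. -/

open Real Topology

lemma gaussianPDFReal_zero_one : gaussianPDFReal 0 1 = gaussPDF := by
  ext x
  simp [gaussianPDFReal, gaussPDF]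

lemma integral_stdGaussian_eq (f : ℝ → ℝ) :
    ∫ x, f x ∂stdGaussian = ∫ x, gaussPDF x * f x := by
  rw [_root_.stdGaussian, integral_gaussianReal_eq_integral_smul one_ne_zero,
    gaussianPDFReal_zero_one]
  rfl

lemma gaussPDF_neg (x : ℝ) : gaussPDF (-x) = gaussPDF x := by
  simp [gaussPDF]

lemma hasDerivAt_gaussPDF (x : ℝ) : HasDerivAt gaussPDF (-x * gaussPDF x) x := by
  refine (((hasDerivAt_pow 2 x).fun_neg.div_const 2).exp.const_mul (√(2 * π))⁻¹
    ).congr_deriv ?_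
  simp only [gaussPDF]
  ring

lemma gaussPDF_eq_mul_exp (x : ℝ) : gaussPDF x = (√(2 * π))⁻¹ * exp (-(1 / 2) * x ^ 2) := by
  rw [gaussPDF]
  ring_nf

lemma integrable_pow_mul_gaussPDF (n : ℕ) : Integrable fun x => x ^ n * gaussPDF x := by
  have := (integrable_rpow_mul_exp_neg_mul_sq (b := 1 / 2) (by norm_num) (s := n)
    (by linarith [n.cast_nonneg (α := ℝ)])).const_mul (√(2 * π))⁻¹
  refine this.congr (ae_of_all _ fun x => ?_)
  simp only [rpow_natCast, gaussPDF_eq_mul_exp]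
  ring

lemma tendsto_pow_mul_gaussPDF_atTop (n : ℕ) :
    Tendsto (fun x => x ^ n * gaussPDF x) atTop (𝓝 0) := by
  have := ((rpow_mul_exp_neg_mul_sq_isLittleO_exp_neg (b := 1 / 2) (by norm_num) n
    ).tendsto_zero_of_tendsto (tendsto_exp_atBot.comp
      (tendsto_id.const_mul_atTop_of_neg (by norm_num)))).const_mul (√(2 * π))⁻¹
  rw [mul_zero] at this
  refine this.congr fun x => ?_
  simp only [rpow_natCast, gaussPDF_eq_mul_exp]
  ring

-- For `m = 0` the truncated exponent `m - 1` is harmless: its term carries the factor `m`.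
lemma integral_Ioi_pow_succ_mul_gaussPDF (m : ℕ) (c : ℝ) :
    ∫ u in Ioi c, u ^ (m + 1) * gaussPDF u
      = c ^ m * gaussPDF c + m * ∫ u in Ioi c, u ^ (m - 1) * gaussPDF u := by
  have hderiv (u : ℝ) : HasDerivAt (fun u => -(u ^ m * gaussPDF u))
      (u ^ (m + 1) * gaussPDF u - m * (u ^ (m - 1) * gaussPDF u)) u :=
    ((hasDerivAt_pow m u).mul (hasDerivAt_gaussPDF u)).neg.congr_deriv (by ring)
  have hsucc := (integrable_pow_mul_gaussPDF (m + 1)).integrableOn (s := Ioi c)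
  have hpred := ((integrable_pow_mul_gaussPDF (m - 1)).integrableOn (s := Ioi c)).const_mul m
  have h := integral_Ioi_of_hasDerivAt_of_tendsto' (fun u _ => hderiv u) (hsucc.sub hpred)
    (by simpa using (tendsto_pow_mul_gaussPDF_atTop m).neg)
  rw [integral_sub hsucc hpred, integral_const_mul] at h
  linarith

lemma integral_Ioi_mul_gaussPDF (c : ℝ) : ∫ u in Ioi c, u * gaussPDF u = gaussPDF c := by
  simpa using integral_Ioi_pow_succ_mul_gaussPDF 0 c

lemma integral_Ioi_sq_mul_gaussPDF (c : ℝ) :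
    ∫ u in Ioi c, u ^ 2 * gaussPDF u = c * gaussPDF c + gaussTail c := by
  simpa [gaussTail] using integral_Ioi_pow_succ_mul_gaussPDF 1 c

lemma negp_sub_mul_sq {a : ℝ} (ha : 0 < a) (b u : ℝ) :
    negp (b - a * u) ^ 2 = (Ioi (b / a)).indicator (fun u => (b - a * u) ^ 2) u := by
  by_cases hu : u ∈ Ioi (b / a)
  · rw [indicator_of_mem hu, negp, min_eq_left]
    linarith [(div_lt_iff₀' ha).mp hu]
  · rw [indicator_of_notMem hu, negp, min_eq_right, zero_pow two_ne_zero]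
    linarith [(le_div_iff₀' ha).mp (not_lt.mp hu)]

lemma integral_negp_sq_stdGaussian {a : ℝ} (ha : 0 < a) (b : ℝ) :
    ∫ g, negp (a * g + b) ^ 2 ∂stdGaussian
      = (a ^ 2 + b ^ 2) * gaussTail (b / a) - a * b * gaussPDF (b / a) := by
  set c := b / a
  have i0 : Integrable gaussPDF := by simpa using integrable_pow_mul_gaussPDF 0
  have i1 : Integrable fun u => u * gaussPDF u := by simpa using integrable_pow_mul_gaussPDF 1
  have i2 := integrable_pow_mul_gaussPDF 2
  calc ∫ g, negp (a * g + b) ^ 2 ∂stdGaussian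
      = ∫ u, gaussPDF u * negp (b - a * u) ^ 2 := by
        rw [integral_stdGaussian_eq, ← integral_neg_eq_self]
        simp only [gaussPDF_neg, mul_neg, neg_add_eq_sub]
    _ = ∫ u in Ioi c,
          a ^ 2 * (u ^ 2 * gaussPDF u) - 2 * a * b * (u * gaussPDF u) + b ^ 2 * gaussPDF u := by
        rw [← integral_indicator measurableSet_Ioi]
        congr with u
        rw [negp_sub_mul_sq ha, ← indicator_mul_right]
        congr with v
        ring
    _ = (a ^ 2 + b ^ 2) * gaussTail c - a * b * gaussPDF c := by
        rw [integral_add (by exact ((i2.const_mul _).sub (i1.const_mul _)).integrableOn)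
            (i0.const_mul _).integrableOn,
          integral_sub (i2.const_mul _).integrableOn (i1.const_mul _).integrableOn,
          integral_const_mul, integral_const_mul, integral_const_mul,
          integral_Ioi_sq_mul_gaussPDF, integral_Ioi_mul_gaussPDF, ← gaussTail]
        linear_combination a * gaussPDF c * mul_div_cancel₀ b ha.ne'

/-- the Gaussian identity
`E[(√(1+t²)G + ts)_−²] = (1+t²+t²s²)·Q(ts/√(1+t²)) − ts√(1+t²)·ψ(ts/√(1+t²))`,
and consequently the Gaussian-mixture threshold function satisfies
`g(κ) = min_t E[(G√(1+t²)+ts)_−²] = min_t {(1+t²+t²s²)Q(·) − ts√(1+t²)ψ(·)}`. -/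
theorem gaussian_negpart_sq_identity :
    (∀ s t : ℝ,
      (∫ g, (negp (Real.sqrt (1 + t ^ 2) * g + t * s)) ^ 2 ∂stdGaussian)
        = (1 + t ^ 2 + t ^ 2 * s ^ 2) * gaussTail (t * s / Real.sqrt (1 + t ^ 2))
            - t * s * Real.sqrt (1 + t ^ 2) * gaussPDF (t * s / Real.sqrt (1 + t ^ 2))) ∧
    (∀ s : ℝ,
      (⨅ t : ℝ, ∫ g, (negp (Real.sqrt (1 + t ^ 2) * g + t * s)) ^ 2 ∂stdGaussian)
        = ⨅ t : ℝ, ((1 + t ^ 2 + t ^ 2 * s ^ 2) * gaussTail (t * s / Real.sqrt (1 + t ^ 2))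
            - t * s * Real.sqrt (1 + t ^ 2) * gaussPDF (t * s / Real.sqrt (1 + t ^ 2)))) := by
  have identity (s t : ℝ) :
      ∫ g, negp (√(1 + t ^ 2) * g + t * s) ^ 2 ∂stdGaussian
        = (1 + t ^ 2 + t ^ 2 * s ^ 2) * gaussTail (t * s / √(1 + t ^ 2))
            - t * s * √(1 + t ^ 2) * gaussPDF (t * s / √(1 + t ^ 2)) := by
    have hpos : 0 < 1 + t ^ 2 := by positivity
    rw [integral_negp_sq_stdGaussian (sqrt_pos.mpr hpos), sq_sqrt hpos.le]
    ring
  exact ⟨identity, fun s => by simp only [identity s]⟩
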